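/- Define h(z) = e^{iπz} · sin(πz) / ( cos((π/2)√z) · cos((π/2)√(−z)) ), where √ is the principal complex square root. Then there exist positive constants C₁, C₂ such that |h(x+iy)| ≤ C₁ e^{−C₂√y} / (1+x²) for all x ∈ ℝ and y ≥ 0, and |h(x+iy)| ≤ C₁ e^{2π|y| − C₂√|y|} / (1+x²) for all x ∈ ℝ and y < 0. -/

import Mathlib

/-!
Write `w = √z` and `w' = √(-z)`. Then `w'² = -w²`, so `|Im w'| = |Re w|` and
`|Im w| + |Im w'| ≥ |w| = √|z|`. Away from the odd integers, the zeros of `cos (π ζ / 2)`, one has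
`|cos (π ζ / 2)| ≳ exp (π |Im ζ| / 2)`. Near an odd integer `m` the zero of `cos (π w / 2)` at
`w = m` is cancelled by the zero of `sin (π z) = ± sin (π (w - m) (w + m))`, and at most one of
`w`, `w'` can be near an odd integer. Since `|e^{iπz} sin (πz)| ≤ e^{π (|y| - y)}`, this gives
`|h z| ≲ (1 + √|z|) e^{π (|y| - y)} e^{-π √|z| / 2}`, and the stretched-exponential decay absorbs
`1 + x²` and leaves `e^{-√|y| / 2}`.
-/

noncomputable section

/-- The principal complex square root, `√z = z^{1/2}` (principal branch, `Re √z ≥ 0`). -/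
def csqrt (z : ℂ) : ℂ := z ^ ((1:ℂ) / 2)

/-- The function `h(z) = e^{iπz} sin(πz) / (cos((π/2)√z) cos((π/2)√(-z)))` of the paper. -/
def hFun (z : ℂ) : ℂ :=
  Complex.exp (Complex.I * Real.pi * z) * Complex.sin (Real.pi * z) /
    (Complex.cos ((Real.pi / 2 : ℝ) * csqrt z) * Complex.cos ((Real.pi / 2 : ℝ) * csqrt (-z)))

open Real

namespace Real

theorem sinh_le_mul_exp (t : ℝ) : sinh t ≤ t * exp t := by
  have h2t : 1 - 2 * t ≤ exp (-(2 * t)) := by linarith [add_one_le_exp (-(2 * t))]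
  have hsplit : exp (-t) = exp t * exp (-(2 * t)) := by rw [← exp_add]; ring_nf
  rw [sinh_eq]
  nlinarith [exp_pos t]

theorem exp_le_eight_mul_sinh {t : ℝ} (ht : 1 / 2 ≤ t) : exp t ≤ 8 * sinh t := by
  have hinv : exp (-t) * exp t = 1 := by rw [← exp_add]; simp
  have hge : 3 / 2 ≤ exp t := by linarith [add_one_le_exp t]
  rw [sinh_eq]
  nlinarith [exp_pos (-t)]

theorem cosh_le_exp_abs (t : ℝ) : cosh t ≤ exp |t| := by
  rw [← cosh_abs, cosh_eq]
  linarith [exp_le_exp.2 (show -|t| ≤ |t| by linarith [abs_nonneg t])]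

theorem one_add_mul_one_add_pow_four_le_exp {s : ℝ} (hs : 0 ≤ s) :
    (1 + s) * (1 + s ^ 4) ≤ 145 * exp s := by
  have h4 := pow_div_factorial_le_exp s hs 4
  have h5 := pow_div_factorial_le_exp s hs 5
  norm_num [Nat.factorial] at h4 h5
  nlinarith [add_one_le_exp s]

end Real

namespace Complex

theorem abs_im_ofReal_mul {r : ℝ} (hr : 0 ≤ r) (z : ℂ) : |((r : ℂ) * z).im| = r * |z.im| := by
  rw [im_ofReal_mul, abs_mul, abs_of_nonneg hr]

theorem sq_norm_sin (z : ℂ) : ‖sin z‖ ^ 2 = Real.sin z.re ^ 2 + Real.sinh z.im ^ 2 := by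
  rw [Complex.sq_norm, normSq_apply, sin_eq]
  simp only [add_re, add_im, mul_re, mul_im, I_re, I_im, sin_ofReal_re, sin_ofReal_im,
    cos_ofReal_re, cos_ofReal_im, sinh_ofReal_re, sinh_ofReal_im, cosh_ofReal_re, cosh_ofReal_im]
  nlinarith [Real.cosh_sq z.im, Real.sin_sq_add_cos_sq z.re]

theorem sq_norm_cos (z : ℂ) : ‖cos z‖ ^ 2 = Real.cos z.re ^ 2 + Real.sinh z.im ^ 2 := by
  rw [Complex.sq_norm, normSq_apply, cos_eq]
  simp only [sub_re, sub_im, mul_re, mul_im, I_re, I_im, sin_ofReal_re, sin_ofReal_im,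
    cos_ofReal_re, cos_ofReal_im, sinh_ofReal_re, sinh_ofReal_im, cosh_ofReal_re, cosh_ofReal_im]
  nlinarith [Real.cosh_sq z.im, Real.sin_sq_add_cos_sq z.re]

theorem norm_sin_le_exp_abs_im (z : ℂ) : ‖sin z‖ ≤ Real.exp |z.im| := by
  refine le_of_pow_le_pow_left₀ two_ne_zero (exp_pos _).le ?_
  have hcosh := Real.cosh_le_exp_abs z.im
  rw [sq_norm_sin]
  nlinarith [Real.sin_sq_le_one z.re, Real.cosh_sq z.im, Real.cosh_pos z.im]

theorem norm_sin_le_norm_mul_exp_abs_im (z : ℂ) : ‖sin z‖ ≤ ‖z‖ * Real.exp |z.im| := by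
  refine le_of_pow_le_pow_left₀ two_ne_zero (by positivity) ?_
  have hsinh : |Real.sinh z.im| ≤ |z.im| * Real.exp |z.im| := by
    rw [Real.abs_sinh]; exact Real.sinh_le_mul_exp _
  have hexp : 1 ≤ Real.exp |z.im| ^ 2 := one_le_pow₀ (Real.one_le_exp (abs_nonneg _))
  have hre : Real.sin z.re ^ 2 ≤ z.re ^ 2 * Real.exp |z.im| ^ 2 :=
    Real.sin_sq_le_sq.trans (le_mul_of_one_le_right (sq_nonneg _) hexp)
  have him : Real.sinh z.im ^ 2 ≤ z.im ^ 2 * Real.exp |z.im| ^ 2 := by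
    rw [← sq_abs (Real.sinh _), ← sq_abs z.im, ← mul_pow]
    exact pow_le_pow_left₀ (abs_nonneg _) hsinh 2
  rw [sq_norm_sin, mul_pow, Complex.sq_norm, normSq_apply]
  linarith

theorem mul_norm_le_norm_sin {z : ℂ} (hz : |z.re| ≤ π / 2) : 2 / π * ‖z‖ ≤ ‖sin z‖ := by
  refine le_of_pow_le_pow_left₀ two_ne_zero (norm_nonneg _) ?_
  have hpi : (2 / π) ^ 2 ≤ 1 := by
    rw [sq_le_one_iff₀ (by positivity), div_le_one pi_pos]; linarith [pi_gt_three]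
  have hre : (2 / π) ^ 2 * z.re ^ 2 ≤ Real.sin z.re ^ 2 := by
    rw [← sq_abs z.re, ← sq_abs (Real.sin _), ← mul_pow]
    exact pow_le_pow_left₀ (by positivity) (Real.mul_abs_le_abs_sin hz) 2
  have him : (2 / π) ^ 2 * z.im ^ 2 ≤ Real.sinh z.im ^ 2 := by
    rw [← sq_abs z.im, ← sq_abs (Real.sinh _), Real.abs_sinh]
    exact (mul_le_of_le_one_left (sq_nonneg _) hpi).trans
      (pow_le_pow_left₀ (abs_nonneg _) (Real.self_le_sinh_iff.2 (abs_nonneg _)) 2)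
  rw [sq_norm_sin, mul_pow, Complex.sq_norm, normSq_apply]
  linarith

theorem sinh_abs_im_le_norm_cos (z : ℂ) : Real.sinh |z.im| ≤ ‖cos z‖ := by
  refine le_of_pow_le_pow_left₀ two_ne_zero (norm_nonneg _) ?_
  rw [sq_norm_cos, ← Real.abs_sinh, sq_abs]
  nlinarith [sq_nonneg (Real.cos z.re)]

theorem norm_sin_pi_mul_sub_intCast (z : ℂ) (n : ℤ) : ‖sin (π * (z - n))‖ = ‖sin (π * z)‖ := by
  rw [mul_sub, mul_comm (π : ℂ) n, sin_antiperiodic.sub_int_mul_eq]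
  simp

theorem norm_cos_pi_div_two_mul_of_odd {m : ℤ} (hm : Odd m) (z : ℂ) :
    ‖cos ((π / 2 : ℝ) * z)‖ = ‖sin ((π / 2 : ℝ) * (z - m))‖ := by
  obtain ⟨k, rfl⟩ := hm
  have : ((π / 2 : ℝ) : ℂ) * z = ((π / 2 : ℝ) * (z - ↑(2 * k + 1)) + k * π) + π / 2 := by
    push_cast; ring
  rw [this, cos_add_pi_div_two, sin_antiperiodic.add_int_mul_eq]
  simp

theorem abs_im_eq_abs_re_of_sq_eq_neg_sq {w w' : ℂ} (h : w' ^ 2 = -w ^ 2) : |w'.im| = |w.re| := by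
  have : (w' - I * w) * (w' + I * w) = 0 := by linear_combination h - w ^ 2 * I_sq
  rcases mul_eq_zero.1 this with h | h
  · simp [sub_eq_zero.1 h]
  · simp [eq_neg_of_add_eq_zero_left h]

end Complex

def NearOddInt (ζ : ℂ) : Prop := ∃ m : ℤ, Odd m ∧ |ζ.re - m| < 2 / 5 ∧ |ζ.im| < 2 / 5

theorem NearOddInt.abs_im_lt {ζ : ℂ} : NearOddInt ζ → |ζ.im| < 2 / 5
  | ⟨_, _, _, him⟩ => him

theorem NearOddInt.lt_abs_re {ζ : ℂ} (h : NearOddInt ζ) : 3 / 5 < |ζ.re| := by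
  obtain ⟨m, hm, hre, -⟩ := h
  have : (1 : ℝ) ≤ |(m : ℝ)| := by exact_mod_cast Int.one_le_abs (by rintro rfl; simp at hm)
  linarith [abs_sub_abs_le_abs_sub (m : ℝ) ζ.re, abs_sub_comm (m : ℝ) ζ.re]

theorem not_nearOddInt_or_not_nearOddInt {w w' : ℂ} (h : w' ^ 2 = -w ^ 2) :
    ¬ NearOddInt w ∨ ¬ NearOddInt w' := by
  by_contra! hboth
  linarith [hboth.1.lt_abs_re, hboth.2.abs_im_lt, Complex.abs_im_eq_abs_re_of_sq_eq_neg_sq h]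

theorem exists_odd_abs_sub_le_one (a : ℝ) : ∃ m : ℤ, Odd m ∧ |a - m| ≤ 1 := by
  refine ⟨2 * round ((a - 1) / 2) + 1, odd_two_mul_add_one _, ?_⟩
  have := abs_sub_round ((a - 1) / 2)
  push_cast
  rw [abs_le] at this ⊢
  constructor <;> linarith

theorem norm_sub_le_norm_cos_of_odd {m : ℤ} (hm : Odd m) {ζ : ℂ} (h : |ζ.re - m| ≤ 1) :
    ‖ζ - m‖ ≤ ‖Complex.cos ((π / 2 : ℝ) * ζ)‖ := by
  have hre : |(((π / 2 : ℝ) : ℂ) * (ζ - m)).re| ≤ π / 2 := by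
    rw [Complex.re_ofReal_mul, Complex.sub_re, Complex.intCast_re, abs_mul,
      abs_of_pos (by positivity)]
    exact mul_le_of_le_one_right (by positivity) h
  calc ‖ζ - m‖ = 2 / π * ‖((π / 2 : ℝ) : ℂ) * (ζ - m)‖ := by
        rw [norm_mul, Complex.norm_real, Real.norm_of_nonneg (by positivity)]
        field_simp
    _ ≤ ‖Complex.sin ((π / 2 : ℝ) * (ζ - m))‖ := Complex.mul_norm_le_norm_sin hre
    _ = ‖Complex.cos ((π / 2 : ℝ) * ζ)‖ := (Complex.norm_cos_pi_div_two_mul_of_odd hm ζ).symm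

theorem exp_le_eight_mul_norm_cos_of_not_nearOddInt {ζ : ℂ} (h : ¬ NearOddInt ζ) :
    exp (π / 2 * |ζ.im|) ≤ 8 * ‖Complex.cos ((π / 2 : ℝ) * ζ)‖ := by
  by_cases him : 2 / 5 ≤ |ζ.im|
  · calc exp (π / 2 * |ζ.im|) ≤ 8 * sinh (π / 2 * |ζ.im|) :=
          exp_le_eight_mul_sinh (by nlinarith [pi_gt_three])
      _ = 8 * sinh |(((π / 2 : ℝ) : ℂ) * ζ).im| := by
          rw [Complex.abs_im_ofReal_mul (by positivity)]
      _ ≤ 8 * ‖Complex.cos ((π / 2 : ℝ) * ζ)‖ := by gcongr; exact Complex.sinh_abs_im_le_norm_cos _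
  · obtain ⟨m, hm, hdist⟩ := exists_odd_abs_sub_le_one ζ.re
    have hfar : 2 / 5 ≤ |ζ.re - m| := by
      by_contra! hnear
      exact h ⟨m, hm, hnear, by linarith⟩
    have hexp : exp (π / 2 * |ζ.im|) ≤ exp 1 :=
      exp_le_exp.2 (by nlinarith [pi_lt_d2, abs_nonneg ζ.im])
    calc exp (π / 2 * |ζ.im|) ≤ 8 * (2 / 5) := by linarith [exp_one_lt_d9]
      _ ≤ 8 * ‖ζ - m‖ := by
          gcongr
          simpa using hfar.trans (Complex.abs_re_le_norm (ζ - m))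
      _ ≤ 8 * ‖Complex.cos ((π / 2 : ℝ) * ζ)‖ := by
          gcongr; exact norm_sub_le_norm_cos_of_odd hm hdist

theorem norm_sin_pi_mul_sq_le_of_nearOddInt {ζ : ℂ} (h : NearOddInt ζ) :
    ‖Complex.sin (π * ζ ^ 2)‖ ≤
      2 * π * (1 + ‖ζ‖) * exp (π * |(ζ ^ 2).im|) * ‖Complex.cos ((π / 2 : ℝ) * ζ)‖ := by
  obtain ⟨m, hm, hre, him⟩ := h
  have hsin : ‖Complex.sin (π * ζ ^ 2)‖ ≤ π * ‖ζ - m‖ * ‖ζ + m‖ * exp (π * |(ζ ^ 2).im|) := by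
    rw [← Complex.norm_sin_pi_mul_sub_intCast _ (m ^ 2)]
    have hsq : ζ ^ 2 - ((m ^ 2 : ℤ) : ℂ) = (ζ - m) * (ζ + m) := by push_cast; ring
    refine (Complex.norm_sin_le_norm_mul_exp_abs_im _).trans_eq ?_
    rw [Complex.abs_im_ofReal_mul pi_pos.le, Complex.sub_im, Complex.intCast_im, sub_zero,
      norm_mul, Complex.norm_real, Real.norm_of_nonneg pi_pos.le, hsq, norm_mul, ← mul_assoc]
  have hsub : ‖ζ - m‖ ≤ 4 / 5 := by
    refine (Complex.norm_le_abs_re_add_abs_im _).trans ?_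
    simp only [Complex.sub_re, Complex.sub_im, Complex.intCast_re, Complex.intCast_im, sub_zero]
    linarith
  have hadd : ‖ζ + m‖ ≤ 2 * (1 + ‖ζ‖) := by
    calc ‖ζ + m‖ = ‖2 * ζ - (ζ - m)‖ := by ring_nf
      _ ≤ ‖2 * ζ‖ + ‖ζ - m‖ := norm_sub_le _ _
      _ ≤ 2 * (1 + ‖ζ‖) := by rw [norm_mul, Complex.norm_two]; linarith
  have hcos := norm_sub_le_norm_cos_of_odd hm (by linarith [abs_nonneg (ζ.re - m)])
  calc ‖Complex.sin (π * ζ ^ 2)‖ ≤ π * ‖ζ - m‖ * ‖ζ + m‖ * exp (π * |(ζ ^ 2).im|) := hsin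
    _ ≤ π * ‖Complex.cos ((π / 2 : ℝ) * ζ)‖ * (2 * (1 + ‖ζ‖)) * exp (π * |(ζ ^ 2).im|) := by
        gcongr
    _ = 2 * π * (1 + ‖ζ‖) * exp (π * |(ζ ^ 2).im|) * ‖Complex.cos ((π / 2 : ℝ) * ζ)‖ := by ring

theorem norm_sin_pi_mul_sq_mul_exp_le (ζ : ℂ) :
    ‖Complex.sin (π * ζ ^ 2)‖ * exp (π / 2 * |ζ.im|) ≤
      20 * (1 + ‖ζ‖) * exp (π * |(ζ ^ 2).im|) * ‖Complex.cos ((π / 2 : ℝ) * ζ)‖ := by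
  have hpos : 0 ≤ (1 + ‖ζ‖) * exp (π * |(ζ ^ 2).im|) * ‖Complex.cos ((π / 2 : ℝ) * ζ)‖ := by
    positivity
  by_cases hnear : NearOddInt ζ
  · have hexp : exp (π / 2 * |ζ.im|) ≤ 3 :=
      (exp_le_exp.2 (by nlinarith [pi_lt_d2, hnear.abs_im_lt, abs_nonneg ζ.im] :
        π / 2 * |ζ.im| ≤ 1)).trans (by linarith [exp_one_lt_d9])
    calc ‖Complex.sin (π * ζ ^ 2)‖ * exp (π / 2 * |ζ.im|)
        ≤ (2 * π * (1 + ‖ζ‖) * exp (π * |(ζ ^ 2).im|) * ‖Complex.cos ((π / 2 : ℝ) * ζ)‖) * 3 := by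
          gcongr; exact norm_sin_pi_mul_sq_le_of_nearOddInt hnear
      _ ≤ 20 * (1 + ‖ζ‖) * exp (π * |(ζ ^ 2).im|) * ‖Complex.cos ((π / 2 : ℝ) * ζ)‖ := by
          nlinarith [pi_lt_d2]
  · have hsin := Complex.norm_sin_le_exp_abs_im (π * ζ ^ 2)
    rw [Complex.abs_im_ofReal_mul pi_pos.le] at hsin
    calc ‖Complex.sin (π * ζ ^ 2)‖ * exp (π / 2 * |ζ.im|)
        ≤ exp (π * |(ζ ^ 2).im|) * (8 * ‖Complex.cos ((π / 2 : ℝ) * ζ)‖) := by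
          gcongr; exact exp_le_eight_mul_norm_cos_of_not_nearOddInt hnear
      _ ≤ 20 * (1 + ‖ζ‖) * exp (π * |(ζ ^ 2).im|) * ‖Complex.cos ((π / 2 : ℝ) * ζ)‖ := by
          nlinarith [norm_nonneg ζ, exp_pos (π * |(ζ ^ 2).im|),
            norm_nonneg (Complex.cos ((π / 2 : ℝ) * ζ))]

theorem norm_sin_pi_mul_mul_exp_le_of_not_nearOddInt {z w w' : ℂ} (hw : w ^ 2 = z)
    (h : ¬ NearOddInt w') :
    ‖Complex.sin (π * z)‖ * exp (π / 2 * (|w.im| + |w'.im|)) ≤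
      160 * (1 + ‖w‖) * exp (π * |z.im|) *
        (‖Complex.cos ((π / 2 : ℝ) * w)‖ * ‖Complex.cos ((π / 2 : ℝ) * w')‖) := by
  have hw_bound := norm_sin_pi_mul_sq_mul_exp_le w
  rw [hw] at hw_bound
  rw [mul_add, exp_add, ← mul_assoc]
  calc ‖Complex.sin (π * z)‖ * exp (π / 2 * |w.im|) * exp (π / 2 * |w'.im|)
      ≤ 20 * (1 + ‖w‖) * exp (π * |z.im|) * ‖Complex.cos ((π / 2 : ℝ) * w)‖ *
          (8 * ‖Complex.cos ((π / 2 : ℝ) * w')‖) := by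
        gcongr; exact exp_le_eight_mul_norm_cos_of_not_nearOddInt h
    _ = _ := by ring

theorem one_add_mul_exp_neg_le {x y s : ℝ} (hx : √|x| ≤ s) (hy : √|y| ≤ s) :
    (1 + s) * exp (-(π / 2 * s)) ≤ 145 * exp (-(1 / 2) * √|y|) / (1 + x ^ 2) := by
  have hs : 0 ≤ s := (sqrt_nonneg _).trans hx
  have hx2 : x ^ 2 ≤ s ^ 4 := by
    have : |x| ≤ s ^ 2 := by
      rw [← sq_sqrt (abs_nonneg x)]
      exact pow_le_pow_left₀ (sqrt_nonneg _) hx 2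
    rw [← sq_abs x, show s ^ 4 = (s ^ 2) ^ 2 by ring]
    exact pow_le_pow_left₀ (abs_nonneg x) this 2
  have hexp : exp s * exp (-(π / 2 * s)) ≤ exp (-(1 / 2) * √|y|) := by
    rw [← exp_add]
    exact exp_le_exp.2 (by nlinarith [pi_gt_three])
  rw [le_div_iff₀ (by positivity)]
  calc (1 + s) * exp (-(π / 2 * s)) * (1 + x ^ 2)
      ≤ (1 + s) * (1 + s ^ 4) * exp (-(π / 2 * s)) := by
        rw [mul_right_comm]; gcongr
    _ ≤ 145 * exp s * exp (-(π / 2 * s)) :=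
        mul_le_mul_of_nonneg_right (one_add_mul_one_add_pow_four_le_exp hs) (exp_pos _).le
    _ ≤ 145 * exp (-(1 / 2) * √|y|) := by
        rw [mul_assoc]; gcongr

theorem csqrt_sq (z : ℂ) : csqrt z ^ 2 = z := by
  rw [csqrt, one_div]
  exact_mod_cast Complex.cpow_nat_inv_pow z two_ne_zero

theorem norm_csqrt (z : ℂ) : ‖csqrt z‖ = √‖z‖ := by
  conv_rhs => rw [← csqrt_sq z]
  rw [norm_pow, sqrt_sq (norm_nonneg _)]

theorem sq_csqrt_neg (z : ℂ) : csqrt (-z) ^ 2 = -csqrt z ^ 2 := by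
  rw [csqrt_sq, csqrt_sq]

theorem sqrt_norm_le_abs_im_csqrt_add_abs_im_csqrt_neg (z : ℂ) :
    √‖z‖ ≤ |(csqrt z).im| + |(csqrt (-z)).im| := by
  rw [Complex.abs_im_eq_abs_re_of_sq_eq_neg_sq (sq_csqrt_neg z), ← norm_csqrt, add_comm]
  exact Complex.norm_le_abs_re_add_abs_im _

theorem norm_hFun_mul_exp_le (z : ℂ) :
    ‖hFun z‖ * exp (π / 2 * (|(csqrt z).im| + |(csqrt (-z)).im|)) ≤
      160 * (1 + √‖z‖) * exp (π * (|z.im| - z.im)) := by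
  set F := ‖Complex.cos ((π / 2 : ℝ) * csqrt z)‖
  set G := ‖Complex.cos ((π / 2 : ℝ) * csqrt (-z))‖
  set X := exp (π / 2 * (|(csqrt z).im| + |(csqrt (-z)).im|))
  have hsin : ‖Complex.sin (π * z)‖ * X ≤ 160 * (1 + √‖z‖) * exp (π * |z.im|) * (F * G) := by
    -- If `√z` is near an odd integer, apply the bound to `-z`, whose square roots are swapped.
    rcases not_nearOddInt_or_not_nearOddInt (sq_csqrt_neg z) with h | h
    · have := norm_sin_pi_mul_mul_exp_le_of_not_nearOddInt (csqrt_sq (-z)) h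
      rwa [mul_neg, Complex.sin_neg, norm_neg, add_comm |(csqrt (-z)).im|, Complex.neg_im,
        abs_neg, norm_csqrt, norm_neg, mul_comm G] at this
    · have := norm_sin_pi_mul_mul_exp_le_of_not_nearOddInt (csqrt_sq z) h
      rwa [norm_csqrt] at this
  have hnorm : ‖hFun z‖ = exp (-(π * z.im)) * ‖Complex.sin (π * z)‖ / (F * G) := by
    rw [hFun, norm_div, norm_mul, norm_mul, Complex.norm_exp]
    congr 3
    simp
  rw [hnorm, div_mul_eq_mul_div]
  refine div_le_of_le_mul₀ (by positivity) (by positivity) ?_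
  calc exp (-(π * z.im)) * ‖Complex.sin (π * z)‖ * X
      = exp (-(π * z.im)) * (‖Complex.sin (π * z)‖ * X) := by ring
    _ ≤ exp (-(π * z.im)) * (160 * (1 + √‖z‖) * exp (π * |z.im|) * (F * G)) := by gcongr
    _ = 160 * (1 + √‖z‖) * exp (π * (|z.im| - z.im)) * (F * G) := by
        rw [mul_sub, sub_eq_add_neg, exp_add]; ring

theorem norm_hFun_le (x y : ℝ) :
    ‖hFun (x + y * Complex.I)‖ ≤
      exp (π * (|y| - y)) * (160 * 145 * exp (-(1 / 2) * √|y|) / (1 + x ^ 2)) := by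
  set z : ℂ := x + y * Complex.I
  have hbound := norm_hFun_mul_exp_le z
  rw [show z.im = y by simp [z]] at hbound
  set s := |(csqrt z).im| + |(csqrt (-z)).im|
  have hs := sqrt_norm_le_abs_im_csqrt_add_abs_im_csqrt_neg z
  have hx : √|x| ≤ s := (sqrt_le_sqrt (by simpa [z] using Complex.abs_re_le_norm z)).trans hs
  have hy : √|y| ≤ s := (sqrt_le_sqrt (by simpa [z] using Complex.abs_im_le_norm z)).trans hs
  calc ‖hFun z‖ ≤ exp (π * (|y| - y)) * (160 * ((1 + s) * exp (-(π / 2 * s)))) := by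
        rw [exp_neg, ← div_eq_mul_inv, mul_div_assoc', mul_div_assoc', le_div_iff₀ (exp_pos _)]
        refine hbound.trans ?_
        rw [mul_comm (exp _)]
        gcongr
    _ ≤ exp (π * (|y| - y)) * (160 * 145 * exp (-(1 / 2) * √|y|) / (1 + x ^ 2)) := by
        rw [mul_assoc 160, mul_div_assoc]
        gcongr
        exact one_add_mul_exp_neg_le hx hy

/-- **Lemma 7 (growth estimates).** `|h(x+iy)| ≤ C₁ e^{-C₂√y}/(1+x²)` for `y ≥ 0`, and
`|h(x+iy)| ≤ C₁ e^{2π|y| - C₂√|y|}/(1+x²)` for `y < 0`. -/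
theorem hFun_estimates :
    ∃ C₁ C₂ : ℝ, 0 < C₁ ∧ 0 < C₂ ∧
      (∀ x y : ℝ, 0 ≤ y →
        ‖hFun (x + y * Complex.I)‖ ≤
          C₁ * Real.exp (-C₂ * Real.sqrt y) / (1 + x ^ 2)) ∧
      (∀ x y : ℝ, y < 0 →
        ‖hFun (x + y * Complex.I)‖ ≤
          C₁ * Real.exp (2 * Real.pi * |y| - C₂ * Real.sqrt |y|) / (1 + x ^ 2)) := by
  refine ⟨160 * 145, 1 / 2, by norm_num, by norm_num, fun x y hy => ?_, fun x y hy => ?_⟩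
  · simpa [abs_of_nonneg hy] using norm_hFun_le x y
  · convert norm_hFun_le x y using 1
    rw [sub_eq_add_neg, exp_add, abs_of_neg hy, show π * (-y - y) = 2 * π * -y by ring,
      neg_mul]
    ring
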